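/- Let δ be regular uncountable, H a structure of size δ, and suppose σ : H → H̃ is the branch-direct-limit embedding of Lemma 1.2 where the distinguished ordinals η along the branch satisfy sup(λ ∩ h[A_ξ]) < η < λ with λ = On ∩ H. Then sup σ''λ < On ∩ H̃; i.e., the embedding is discontinuous at λ and H̃ has ordinals above the supremum of the pointwise image of λ. -/

import Mathlib

open FirstOrder Cardinal

/-- The language of set theory: a single binary relation. -/
def memRelTy : ℕ → Type := fun n => match n with | 2 => PUnit | _ => Empty

/-- The language of set theory. -/
def Lmem : FirstOrder.Language := ⟨fun _ => Empty, memRelTy⟩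

/-- The membership relation symbol. -/
def memRel : Lmem.Relations 2 := PUnit.unit

/-- Any (transitive) set `M` of `ZFSet`s is an `∈`-structure. -/
instance zMemStruct (M : ZFSet) : Lmem.Structure {x : ZFSet // x ∈ M} where
  funMap := fun f _ => Empty.elim f
  RelMap := fun {n} r x =>
    match n, r, x with
    | 2, _, x => (x 0).1 ∈ (x 1).1

/-- `σ : M → N` is `κ`-complete: for every elementary `τ : P → N` with `|P| < κ` there is
an elementary `π : P → M` with `σ (π x) = τ x` whenever `τ x ∈ ran σ`. -/
def IsCompleteEmbedding (L : FirstOrder.Language) {M N : Type 1} [L.Structure M]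
    [L.Structure N] (κ : Cardinal.{1}) (σ : M ↪ₑ[L] N) : Prop :=
  ∀ (P : Type 1) (_ : L.Structure P) (τ : P ↪ₑ[L] N), #P < κ →
    ∃ π : P ↪ₑ[L] M, ∀ x : P, (∃ y, σ y = τ x) → σ (π x) = τ x

/-- `f` is a (set) surjection from `A` onto `B`. -/
def IsSurjZFun (A B f : ZFSet) : Prop :=
  ZFSet.IsFunc A B f ∧ ∀ y ∈ B, ∃ x ∈ A, ZFSet.pair x y ∈ f

/-- `f` is a (set) injection from `A` into `B`. -/
def IsInjZFun (A B f : ZFSet) : Prop :=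
  ZFSet.IsFunc A B f ∧ ∀ x x' y : ZFSet, x ∈ A → x' ∈ A →
    ZFSet.pair x y ∈ f → ZFSet.pair x' y ∈ f → x = x'

/-- `κ` is a cardinal in the sense of the (inner) model `W`: an ordinal not surjected
onto by a smaller ordinal via a function belonging to `W`. -/
def WIsCardinal (W : Set ZFSet) (κ : ZFSet) : Prop :=
  κ.IsOrdinal ∧ ∀ β f : ZFSet, β ∈ κ → f ∈ W → ¬ IsSurjZFun β κ f

/-- `lam = δ⁺ᵂ`: the successor of `d` as computed in `W`. -/
def WSuccOf (W : Set ZFSet) (d lam : ZFSet) : Prop :=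
  lam.IsOrdinal ∧ d ∈ lam ∧ WIsCardinal W lam ∧
    ∀ β : ZFSet, β ∈ lam → WIsCardinal W β → β ∈ d ∨ β = d

/-- `W` is an inner model: a transitive class containing all ordinals and closed under
basic ZFC-style operations (collapsing of non-cardinals, images and restrictions of
functions). -/
def IsInnerModel (W : Set ZFSet) : Prop :=
  (∀ x ∈ W, ∀ y ∈ x, y ∈ W) ∧
  (∀ x : ZFSet, x.IsOrdinal → x ∈ W) ∧
  (∀ α : ZFSet, α.IsOrdinal → ¬ WIsCardinal W α →
    ∃ β f : ZFSet, β ∈ α ∧ f ∈ W ∧ IsSurjZFun β α f) ∧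
  (∀ f a : ZFSet, f ∈ W → a ∈ W →
    ∃ b : ZFSet, b ∈ W ∧ ∀ y : ZFSet, y ∈ b ↔ ∃ x : ZFSet, x ∈ a ∧ ZFSet.pair x y ∈ f) ∧
  (∀ f a : ZFSet, f ∈ W → a ∈ W →
    ∃ g : ZFSet, g ∈ W ∧ ∀ p : ZFSet, p ∈ g ↔
      (p ∈ f ∧ ∃ x y : ZFSet, x ∈ a ∧ p = ZFSet.pair x y))

/-- `g : d.toSet → ZFSet` is a cofinal map (in `V`) into the ordinal `lam`. -/
def VCofinalMap (e lam : ZFSet) (g : {x : ZFSet // x ∈ e} → ZFSet) : Prop :=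
  (∀ x, g x ∈ lam) ∧ ∀ y ∈ lam, ∃ x, y ∈ g x ∨ y = g x

/-- `cf(lam) = |d|` computed in `V`. -/
def VCofEq (d lam : ZFSet) : Prop :=
  (∃ g, VCofinalMap d lam g) ∧ ∀ e ∈ d, ¬ ∃ g, VCofinalMap e lam g

/-- The ordinal `d` is a regular cardinal (in `V`). -/
def VRegularCardinal (d : ZFSet) : Prop :=
  d.IsOrdinal ∧ (Cardinal.mk d.toSet).IsRegular ∧
    ∀ e ∈ d, Cardinal.mk e.toSet < Cardinal.mk d.toSet

/-- `p` is the powerset of `κ` as computed in `W`. -/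
def WPowerset (W : Set ZFSet) (κ p : ZFSet) : Prop :=
  p ∈ W ∧ ∀ x : ZFSet, x ∈ p ↔ (x ∈ W ∧ x ⊆ κ)

/-- `d` is (strongly) inaccessible in `W`. -/
def WInaccessible (W : Set ZFSet) (d : ZFSet) : Prop :=
  WIsCardinal W d ∧
  (∀ e f : ZFSet, e ∈ d → f ∈ W → ¬ (ZFSet.IsFunc e d f ∧
      ∀ y ∈ d, ∃ x w : ZFSet, x ∈ e ∧ ZFSet.pair x w ∈ f ∧ (y ∈ w ∨ y = w))) ∧
  (∀ e ∈ d, ∃ κ : ZFSet, κ ∈ d ∧ e ∈ κ ∧ WIsCardinal W κ) ∧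
  (∀ κ p : ZFSet, κ ∈ d → WIsCardinal W κ → WPowerset W κ p →
    ∃ e f : ZFSet, e ∈ d ∧ f ∈ W ∧ IsInjZFun p e f)

/-- `π` is elementary (for `∈`-formulas) on the subset `S` of the transitive set `M`,
as a partial map from `M` to `N`. -/
def ElemOnSub (M N : ZFSet) (S : Set ZFSet)
    (π : {a : ZFSet // a ∈ M} → {a : ZFSet // a ∈ N}) : Prop :=
  ∀ (n : ℕ) (φ : Lmem.Formula (Fin n)) (x : Fin n → {a : ZFSet // a ∈ M}),
    (∀ i, (x i).1 ∈ S) → (φ.Realize x ↔ φ.Realize (π ∘ x))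

/-!
All the `η_ξ` are sent to one and the same point `g = p_ξ(η_ξ)` of `H̃`, an ordinal since `p_ξ`
is elementary on `h[A_ξ ∪ {η_ξ}]` and being an ordinal is `Δ₀`. An ordinal `ζ ∈ H` lies in
some hull `h[A_ξ]`, so `ζ < η_ξ`, and `σ ζ = p_ξ ζ < p_ξ η_ξ = g`.
-/

open FirstOrder.Language BoundedFormula

def memFormula {α : Type} {n : ℕ} (t₁ t₂ : Lmem.Term (α ⊕ Fin n)) : Lmem.BoundedFormula α n :=
  memRel.boundedFormula₂ t₁ t₂

/-- The `Δ₀` definition of `ZFSet.IsOrdinal`; it is absolute for transitive sets. -/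
def isOrdinalFormula : Lmem.Formula (Fin 1) :=
  let x : {n : ℕ} → Lmem.Term (Fin 1 ⊕ Fin n) := Term.var (Sum.inl 0)
  (∀' (memFormula &0 x ⟹ ∀' (memFormula &1 &0 ⟹ memFormula &1 x))) ⊓
    (∀' ∀' ∀' (memFormula &0 &1 ⟹ memFormula &1 &2 ⟹ memFormula &2 x ⟹ memFormula &0 &2))

variable {M : ZFSet}

@[simp] theorem realize_memFormula {α : Type} {n : ℕ} (t₁ t₂ : Lmem.Term (α ⊕ Fin n))
    (v : α → {x // x ∈ M}) (xs : Fin n → {x // x ∈ M}) :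
    (memFormula t₁ t₂).Realize v xs ↔
      (t₁.realize (Sum.elim v xs)).1 ∈ (t₂.realize (Sum.elim v xs)).1 :=
  Iff.rfl

theorem realize_isOrdinalFormula (hM : M.IsTransitive) (a : {x // x ∈ M}) :
    isOrdinalFormula.Realize (fun _ => a) ↔ a.1.IsOrdinal := by
  have below : ∀ {y}, y ∈ a.1 → y ∈ M := fun hy => hM _ a.2 hy
  simp only [isOrdinalFormula, Formula.Realize, realize_inf, realize_all, realize_imp]
  change ((∀ y : {x // x ∈ M}, y.1 ∈ a.1 → ∀ z : {x // x ∈ M}, z.1 ∈ y.1 → z.1 ∈ a.1) ∧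
      ∀ y z w : {x // x ∈ M}, y.1 ∈ z.1 → z.1 ∈ w.1 → w.1 ∈ a.1 → y.1 ∈ w.1) ↔ _
  simp only [Subtype.forall]
  constructor
  · rintro ⟨htr, htrans⟩
    exact ⟨fun y hy z hz => htr y (below hy) hy z (hM _ (below hy) hz) hz,
      fun hyz hzw hwa => htrans _ (hM _ (hM _ (below hwa) hzw) hyz) _ (hM _ (below hwa) hzw) _
        (below hwa) hyz hzw hwa⟩
  · intro h
    exact ⟨fun y _ hy z _ hz => h.isTransitive y hy hz,
      fun y _ z _ w _ hyz hzw hwa => h.mem_trans' hyz hzw hwa⟩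

theorem ElemOnSub.mem_iff {N : ZFSet} {S : Set ZFSet}
    {π : {a : ZFSet // a ∈ M} → {a : ZFSet // a ∈ N}} (h : ElemOnSub M N S π)
    {a b : {x : ZFSet // x ∈ M}} (ha : a.1 ∈ S) (hb : b.1 ∈ S) :
    a.1 ∈ b.1 ↔ (π a).1 ∈ (π b).1 := by
  have := h 2 (memFormula (.var (.inl 0)) (.var (.inl 1))) ![a, b]
    (by simp [Fin.forall_fin_two, ha, hb])
  simpa [Formula.Realize] using this

theorem ElemOnSub.isOrdinal_iff {N : ZFSet} (hM : M.IsTransitive) (hN : N.IsTransitive)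
    {S : Set ZFSet} {π : {a : ZFSet // a ∈ M} → {a : ZFSet // a ∈ N}} (h : ElemOnSub M N S π)
    {a : {x : ZFSet // x ∈ M}} (ha : a.1 ∈ S) :
    a.1.IsOrdinal ↔ (π a).1.IsOrdinal := by
  rw [← realize_isOrdinalFormula hM, ← realize_isOrdinalFormula hN]
  exact h 1 isOrdinalFormula (fun _ => a) (fun _ => ha)

theorem stmt12_general (δ : Cardinal.{1}) (hδ : ℵ₀ < δ)
    (H Ht : ZFSet) (hH : H.IsTransitive) (hHt : Ht.IsTransitive)
    (hullA hullFull : Ordinal.{1} → Set ZFSet) (η : Ordinal.{1} → ZFSet)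
    (p : Ordinal.{1} → {a : ZFSet // a ∈ H} → {a : ZFSet // a ∈ Ht})
    (σ : {a : ZFSet // a ∈ H} → {a : ZFSet // a ∈ Ht})
    (hsub : ∀ ξ : Ordinal, hullA ξ ⊆ hullFull ξ ∧ hullFull ξ ⊆ H.toSet)
    (hcov : ∀ x ∈ H.toSet, ∃ ξ, ξ < δ.ord ∧ x ∈ hullA ξ)
    (hη : ∀ ξ : Ordinal, ξ < δ.ord → (η ξ).IsOrdinal ∧ η ξ ∈ H ∧ η ξ ∈ hullFull ξ ∧
      ∀ x ∈ hullA ξ, x.IsOrdinal → x ∈ η ξ)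
    (helem : ∀ ξ : Ordinal, ξ < δ.ord → ElemOnSub H Ht (hullFull ξ) (p ξ))
    (hagree : ∀ ξ : Ordinal, ξ < δ.ord → ∀ (x : ZFSet) (hx : x ∈ H), x ∈ hullA ξ →
      σ ⟨x, hx⟩ = p ξ ⟨x, hx⟩)
    (hthread : ∀ ξ ξ' : Ordinal, ξ < δ.ord → ξ' < δ.ord →
      ∀ (h1 : η ξ ∈ H) (h2 : η ξ' ∈ H), p ξ ⟨η ξ, h1⟩ = p ξ' ⟨η ξ', h2⟩) :
    ∃ g : ZFSet, g ∈ Ht ∧ g.IsOrdinal ∧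
      ∀ (x : ZFSet) (hx : x ∈ H), x.IsOrdinal → (σ ⟨x, hx⟩).1 ∈ g := by
  obtain ⟨ξ₀, hξ₀⟩ : ∃ ξ, ξ < δ.ord := ⟨0, Cardinal.ord_pos.2 (aleph0_pos.trans hδ)⟩
  obtain ⟨hord₀, hηH₀, hηF₀, -⟩ := hη ξ₀ hξ₀
  refine ⟨(p ξ₀ ⟨η ξ₀, hηH₀⟩).1, (p ξ₀ ⟨η ξ₀, hηH₀⟩).2, ((helem ξ₀ hξ₀).isOrdinal_iff hH hHt hηF₀).1 hord₀, ?_⟩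
  intro x hx hxord
  obtain ⟨ξ, hξ, hxA⟩ := hcov x hx
  obtain ⟨-, hηH, hηF, hbound⟩ := hη ξ hξ
  rw [hagree ξ hξ x hx hxA, ← hthread ξ ξ₀ hξ hξ₀ hηH hηH₀]
  exact ((helem ξ hξ).mem_iff ((hsub ξ).1 hxA) hηF).1 (hbound x hxA hxord)

/-- Discontinuity of the branch embedding at `λ = On ∩ H` (Lemma 1.2): if `σ : H → H̃` is
the direct limit embedding along a branch, with limit maps `p ξ` elementary on the hulls
`h[A_ξ ∪ {η_ξ}]`, thresholds `η_ξ` above all ordinals of `h[A_ξ]`, the hulls `h[A_ξ]`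
covering `H`, and the thread `(η_ξ)` collapsing to a single point of `H̃`, then
`sup σ''(On ∩ H) < On ∩ H̃`: there is an ordinal of `H̃` above every `σ ζ`, `ζ ∈ On ∩ H`. -/
theorem stmt12 (δ : Cardinal.{1}) (hreg : δ.IsRegular) (hδ : ℵ₀ < δ)
    (H Ht : ZFSet) (hH : H.IsTransitive) (hHt : Ht.IsTransitive)
    (hHcard : Cardinal.mk H.toSet = δ)
    (hullA hullFull : Ordinal.{1} → Set ZFSet) (η : Ordinal.{1} → ZFSet)
    (p : Ordinal.{1} → {a : ZFSet // a ∈ H} → {a : ZFSet // a ∈ Ht})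
    (σ : {a : ZFSet // a ∈ H} → {a : ZFSet // a ∈ Ht})
    (hσ : ElemOnSub H Ht Set.univ σ)
    (hmono : ∀ ξ ξ' : Ordinal, ξ ≤ ξ' → hullA ξ ⊆ hullA ξ')
    (hsub : ∀ ξ : Ordinal, hullA ξ ⊆ hullFull ξ ∧ hullFull ξ ⊆ H.toSet)
    (hcov : ∀ x ∈ H.toSet, ∃ ξ, ξ < δ.ord ∧ x ∈ hullA ξ)
    (hη : ∀ ξ : Ordinal, ξ < δ.ord → (η ξ).IsOrdinal ∧ η ξ ∈ H ∧ η ξ ∈ hullFull ξ ∧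
      ∀ x ∈ hullA ξ, x.IsOrdinal → x ∈ η ξ)
    (helem : ∀ ξ : Ordinal, ξ < δ.ord → ElemOnSub H Ht (hullFull ξ) (p ξ))
    (hagree : ∀ ξ : Ordinal, ξ < δ.ord → ∀ (x : ZFSet) (hx : x ∈ H), x ∈ hullA ξ →
      σ ⟨x, hx⟩ = p ξ ⟨x, hx⟩)
    (hthread : ∀ ξ ξ' : Ordinal, ξ < δ.ord → ξ' < δ.ord →
      ∀ (h1 : η ξ ∈ H) (h2 : η ξ' ∈ H), p ξ ⟨η ξ, h1⟩ = p ξ' ⟨η ξ', h2⟩) :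
    ∃ g : ZFSet, g ∈ Ht ∧ g.IsOrdinal ∧
      ∀ (x : ZFSet) (hx : x ∈ H), x.IsOrdinal → (σ ⟨x, hx⟩).1 ∈ g :=
  stmt12_general δ hδ H Ht hH hHt hullA hullFull η p σ hsub hcov hη helem hagree hthread
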